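/- Let u₁, u₂ : ℝⁿ → ℂ be h-dependent compactly supported functions (h ∈ (0,1]) whose semiclassical Fourier transforms satisfy: (i) there exist N, C with |F_h u_j(ξ)| ≤ C h^{-N}⟨ξ⟩^N for j = 1,2; (ii) there is a finite open cover {U_l} of ℝⁿ such that on each U_l, either F_h u₁(ξ) = O(h^∞⟨ξ⟩^{-∞}) uniformly on U_l, or F_h u₂(-ξ) = O(h^∞⟨ξ⟩^{-∞}) uniformly on U_l. Then (2πh)^{-n} ∫ F_h u₁(ξ) F_h u₂(-ξ) dξ = O(h^∞), i.e., for every M ∈ ℕ there exist C_M and h_M > 0 with |(2πh)^{-n} ∫ F_h u₁(ξ) F_h u₂(-ξ) dξ| ≤ C_M h^M for 0 < h < h_M. -/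
import Mathlib


open MeasureTheory

noncomputable def dotR {n : ℕ} (x y : Fin n → ℝ) : ℝ := ∑ i, x i * y i

noncomputable def semiFT {n : ℕ} (h : ℝ) (f : (Fin n → ℝ) → ℂ) (ξ : Fin n → ℝ) : ℂ :=
  ∫ x : Fin n → ℝ, Complex.exp (-Complex.I * (dotR x ξ : ℂ) / (h : ℂ)) * f x

/-- `g(ξ,h) = O(h^∞ ⟨ξ⟩^{-∞})` uniformly on `U`. -/
def BigOhInftyOn {n : ℕ} (g : ℝ → (Fin n → ℝ) → ℂ) (U : Set (Fin n → ℝ)) : Prop :=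
  ∀ M N : ℕ, ∃ C : ℝ, ∀ h ∈ Set.Ioc (0 : ℝ) 1, ∀ ξ ∈ U,
    ‖g h ξ‖ ≤ C * h ^ M * (1 + dotR ξ ξ) ^ (-(N : ℝ) / 2)

lemma dotR_self_nonneg {n : ℕ} (ξ : Fin n → ℝ) : 0 ≤ dotR ξ ξ :=
  Finset.sum_nonneg fun i _ => mul_self_nonneg _

lemma dotR_neg_neg {n : ℕ} (ξ : Fin n → ℝ) : dotR (-ξ) (-ξ) = dotR ξ ξ := by
  simp [dotR]

lemma norm_sq_le_dotR {n : ℕ} (ξ : Fin n → ℝ) : ‖ξ‖ ^ 2 ≤ dotR ξ ξ := by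
  have h : ‖ξ‖ ≤ Real.sqrt (dotR ξ ξ) := by
    rw [pi_norm_le_iff_of_nonneg (Real.sqrt_nonneg _)]
    intro i
    rw [Real.norm_eq_abs, ← Real.sqrt_sq_eq_abs]
    refine Real.sqrt_le_sqrt ?_
    rw [sq]
    exact Finset.single_le_sum (fun j _ => mul_self_nonneg (ξ j)) (Finset.mem_univ i)
  calc ‖ξ‖ ^ 2 ≤ Real.sqrt (dotR ξ ξ) ^ 2 := by
        exact pow_le_pow_left₀ (norm_nonneg _) h 2
    _ = dotR ξ ξ := Real.sq_sqrt (dotR_self_nonneg ξ)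

lemma integrable_weight (n : ℕ) :
    Integrable (fun ξ : Fin n → ℝ => (1 + dotR ξ ξ) ^ (-((n : ℝ) + 1))) volume := by
  have hr : (Module.finrank ℝ (Fin n → ℝ) : ℝ) < 2 * ((n : ℝ) + 1) := by
    rw [Module.finrank_fin_fun]; push_cast; linarith
  have base : Integrable (fun ξ : Fin n → ℝ => ((1 : ℝ) + ‖ξ‖ ^ 2) ^ (-((n : ℝ) + 1)))
      volume := by
    have := integrable_rpow_neg_one_add_norm_sq (E := Fin n → ℝ) (μ := volume) hr
    have hexp : -(2 * ((n : ℝ) + 1)) / 2 = -((n : ℝ) + 1) := by ring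
    simpa [hexp] using this
  have hc : Continuous fun ξ : Fin n → ℝ => 1 + dotR ξ ξ :=
    continuous_const.add
      (continuous_finset_sum _ fun i _ => (continuous_apply i).mul (continuous_apply i))
  refine base.mono' ?_ (Filter.Eventually.of_forall fun ξ => ?_)
  · exact (hc.rpow_const fun ξ =>
      Or.inl (ne_of_gt (by linarith [dotR_self_nonneg ξ]))).aestronglyMeasurable
  · have h0 := dotR_self_nonneg ξ
    rw [Real.norm_of_nonneg (Real.rpow_nonneg (by linarith) _)]
    refine Real.rpow_le_rpow_of_nonpos (by positivity) ?_ (by push_cast; linarith)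
    linarith [norm_sq_le_dotR ξ]

lemma combine {h t a b C C' : ℝ} (hh : 0 < h) (ht : 1 ≤ t) (M n Nj : ℕ)
    (ha : a ≤ C * h ^ (M + n + Nj) * t ^ (-((2 * (n + 1) + Nj : ℕ) : ℝ) / 2))
    (hb : b ≤ C' * h ^ (-(Nj : ℝ)) * t ^ ((Nj : ℝ) / 2))
    (ha0 : 0 ≤ a) (hb0 : 0 ≤ b) :
    a * b ≤ (C * C') * h ^ (M + n) * t ^ (-((n : ℝ) + 1)) := by
  have htpos : (0 : ℝ) < t := lt_of_lt_of_le one_pos ht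
  have hXnn : 0 ≤ C * h ^ (M + n + Nj) * t ^ (-((2 * (n + 1) + Nj : ℕ) : ℝ) / 2) :=
    le_trans ha0 ha
  calc a * b ≤ (C * h ^ (M + n + Nj) * t ^ (-((2 * (n + 1) + Nj : ℕ) : ℝ) / 2)) *
        (C' * h ^ (-(Nj : ℝ)) * t ^ ((Nj : ℝ) / 2)) := mul_le_mul ha hb hb0 hXnn
    _ = (C * C') * (h ^ (((M + n + Nj : ℕ) : ℝ)) * h ^ (-(Nj : ℝ))) *
        (t ^ (-((2 * (n + 1) + Nj : ℕ) : ℝ) / 2) * t ^ ((Nj : ℝ) / 2)) := by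
        rw [Real.rpow_natCast]; ring
    _ = (C * C') * h ^ (((M + n : ℕ) : ℝ)) * t ^ (-((n : ℝ) + 1)) := by
        rw [← Real.rpow_add hh, ← Real.rpow_add htpos]
        congr 2
        · push_cast; ring
        · push_cast; ring
    _ = (C * C') * h ^ (M + n) * t ^ (-((n : ℝ) + 1)) := by
        rw [Real.rpow_natCast]

/-- Pairing of two compactly supported families whose semiclassical Fourier transforms are
polynomially bounded, and such that on each member of a finite open cover of ℝⁿ one of the
two factors is `O(h^∞⟨ξ⟩^{-∞})`, is `O(h^∞)`. -/
theorem stmt4 (n : ℕ) (u₁ u₂ : ℝ → (Fin n → ℝ) → ℂ)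
    (hs₁ : ∀ h ∈ Set.Ioc (0 : ℝ) 1, HasCompactSupport (u₁ h))
    (hs₂ : ∀ h ∈ Set.Ioc (0 : ℝ) 1, HasCompactSupport (u₂ h))
    (hpoly₁ : ∃ (N : ℕ) (C : ℝ), ∀ h ∈ Set.Ioc (0 : ℝ) 1, ∀ ξ : Fin n → ℝ,
      ‖semiFT h (u₁ h) ξ‖ ≤ C * h ^ (-(N : ℝ)) * (1 + dotR ξ ξ) ^ ((N : ℝ) / 2))
    (hpoly₂ : ∃ (N : ℕ) (C : ℝ), ∀ h ∈ Set.Ioc (0 : ℝ) 1, ∀ ξ : Fin n → ℝ,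
      ‖semiFT h (u₂ h) ξ‖ ≤ C * h ^ (-(N : ℝ)) * (1 + dotR ξ ξ) ^ ((N : ℝ) / 2))
    (hcover : ∃ (L : ℕ) (U : Fin L → Set (Fin n → ℝ)),
      (∀ l, IsOpen (U l)) ∧ (⋃ l, U l) = Set.univ ∧
      ∀ l, BigOhInftyOn (fun h ξ => semiFT h (u₁ h) ξ) (U l) ∨
        BigOhInftyOn (fun h ξ => semiFT h (u₂ h) (-ξ)) (U l)) :
    ∀ M : ℕ, ∃ C hM : ℝ, 0 < hM ∧ ∀ h : ℝ, 0 < h → h < hM →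
      ‖(((2 * Real.pi * h) ^ (-(n : ℝ)) : ℝ) : ℂ) *
          ∫ ξ : Fin n → ℝ, semiFT h (u₁ h) ξ * semiFT h (u₂ h) (-ξ)‖ ≤ C * h ^ M := by
  obtain ⟨N₁, C₁, hB₁⟩ := hpoly₁
  obtain ⟨N₂, C₂, hB₂⟩ := hpoly₂
  obtain ⟨L, U, hUopen, hUcov, hUalt⟩ := hcover
  intro M
  have hl : ∀ l : Fin L, ∃ D : ℝ, 0 ≤ D ∧ ∀ h ∈ Set.Ioc (0 : ℝ) 1, ∀ ξ ∈ U l,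
      ‖semiFT h (u₁ h) ξ * semiFT h (u₂ h) (-ξ)‖ ≤
        D * h ^ (M + n) * (1 + dotR ξ ξ) ^ (-((n : ℝ) + 1)) := by
    intro l
    rcases hUalt l with hsm | hsm
    · obtain ⟨C, hC⟩ := hsm (M + n + N₂) (2 * (n + 1) + N₂)
      refine ⟨max (C * C₂) 0, le_max_right _ _, fun h hh ξ hξ => ?_⟩
      have ht : (1 : ℝ) ≤ 1 + dotR ξ ξ := by linarith [dotR_self_nonneg ξ]
      have key := combine hh.1 ht M n N₂ (hC h hh ξ hξ)
        (by have t := hB₂ h hh (-ξ); rwa [dotR_neg_neg] at t) (norm_nonneg _) (norm_nonneg _)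
      rw [norm_mul]
      refine key.trans ?_
      have htp : (0 : ℝ) ≤ (1 + dotR ξ ξ) ^ (-((n : ℝ) + 1)) :=
        Real.rpow_nonneg (by linarith) _
      exact mul_le_mul_of_nonneg_right
        (mul_le_mul_of_nonneg_right (le_max_left _ _) (pow_nonneg hh.1.le _)) htp
    · obtain ⟨C, hC⟩ := hsm (M + n + N₁) (2 * (n + 1) + N₁)
      refine ⟨max (C * C₁) 0, le_max_right _ _, fun h hh ξ hξ => ?_⟩
      have ht : (1 : ℝ) ≤ 1 + dotR ξ ξ := by linarith [dotR_self_nonneg ξ]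
      have key := combine hh.1 ht M n N₁ (hC h hh ξ hξ)
        (hB₁ h hh ξ) (norm_nonneg _) (norm_nonneg _)
      rw [norm_mul, mul_comm]
      refine key.trans ?_
      have htp : (0 : ℝ) ≤ (1 + dotR ξ ξ) ^ (-((n : ℝ) + 1)) :=
        Real.rpow_nonneg (by linarith) _
      exact mul_le_mul_of_nonneg_right
        (mul_le_mul_of_nonneg_right (le_max_left _ _) (pow_nonneg hh.1.le _)) htp
  choose D hD0 hDb using hl
  set Dtot : ℝ := ∑ l, D l with hDtot
  have hDtot0 : 0 ≤ Dtot := Finset.sum_nonneg fun l _ => hD0 l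
  set IW : ℝ := ∫ ξ : Fin n → ℝ, (1 + dotR ξ ξ) ^ (-((n : ℝ) + 1)) with hIW
  refine ⟨(2 * Real.pi) ^ (-(n : ℝ)) * (Dtot * IW), 1, one_pos, fun h hpos hlt => ?_⟩
  have hh : h ∈ Set.Ioc (0 : ℝ) 1 := ⟨hpos, le_of_lt hlt⟩
  -- pointwise bound
  have hptw : ∀ ξ : Fin n → ℝ, ‖semiFT h (u₁ h) ξ * semiFT h (u₂ h) (-ξ)‖ ≤
      (Dtot * h ^ (M + n)) * ((1 + dotR ξ ξ) ^ (-((n : ℝ) + 1))) := by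
    intro ξ
    have : ξ ∈ ⋃ l, U l := hUcov ▸ Set.mem_univ ξ
    obtain ⟨l, hl'⟩ := Set.mem_iUnion.mp this
    refine (hDb l h hh ξ hl').trans ?_
    have htp : (0 : ℝ) ≤ (1 + dotR ξ ξ) ^ (-((n : ℝ) + 1)) :=
      Real.rpow_nonneg (by linarith [dotR_self_nonneg ξ]) _
    have hDl : D l ≤ Dtot :=
      Finset.single_le_sum (fun j _ => hD0 j) (Finset.mem_univ l)
    calc D l * h ^ (M + n) * (1 + dotR ξ ξ) ^ (-((n : ℝ) + 1))
        ≤ Dtot * h ^ (M + n) * (1 + dotR ξ ξ) ^ (-((n : ℝ) + 1)) := by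
          exact mul_le_mul_of_nonneg_right
            (mul_le_mul_of_nonneg_right hDl (pow_nonneg hpos.le _)) htp
      _ = (Dtot * h ^ (M + n)) * ((1 + dotR ξ ξ) ^ (-((n : ℝ) + 1))) := by ring
  have hInt : ‖∫ ξ : Fin n → ℝ, semiFT h (u₁ h) ξ * semiFT h (u₂ h) (-ξ)‖ ≤
      ∫ ξ : Fin n → ℝ, (Dtot * h ^ (M + n)) * ((1 + dotR ξ ξ) ^ (-((n : ℝ) + 1))) :=
    norm_integral_le_of_norm_le ((integrable_weight n).const_mul _)
      (Filter.Eventually.of_forall hptw)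
  rw [integral_const_mul] at hInt
  have hcn : (0 : ℝ) ≤ (2 * Real.pi * h) ^ (-(n : ℝ)) :=
    Real.rpow_nonneg (by positivity) _
  have hnorm : ‖(((2 * Real.pi * h) ^ (-(n : ℝ)) : ℝ) : ℂ) *
      ∫ ξ : Fin n → ℝ, semiFT h (u₁ h) ξ * semiFT h (u₂ h) (-ξ)‖ =
      (2 * Real.pi * h) ^ (-(n : ℝ)) *
        ‖∫ ξ : Fin n → ℝ, semiFT h (u₁ h) ξ * semiFT h (u₂ h) (-ξ)‖ := by
    rw [norm_mul, Complex.norm_real, Real.norm_of_nonneg hcn]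
  rw [hnorm]
  have step : (2 * Real.pi * h) ^ (-(n : ℝ)) *
      ‖∫ ξ : Fin n → ℝ, semiFT h (u₁ h) ξ * semiFT h (u₂ h) (-ξ)‖ ≤
      (2 * Real.pi * h) ^ (-(n : ℝ)) * ((Dtot * h ^ (M + n)) * IW) :=
    mul_le_mul_of_nonneg_left hInt hcn
  refine step.trans_eq ?_
  have hpow : h ^ (-(n : ℝ)) * h ^ (M + n) = h ^ M := by
    rw [← Real.rpow_natCast h (M + n), ← Real.rpow_add hpos, ← Real.rpow_natCast h M]
    congr 1
    push_cast; ring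
  rw [Real.mul_rpow (by positivity) hpos.le]
  calc (2 * Real.pi) ^ (-(n : ℝ)) * h ^ (-(n : ℝ)) * ((Dtot * h ^ (M + n)) * IW)
      = (2 * Real.pi) ^ (-(n : ℝ)) * (Dtot * IW) * (h ^ (-(n : ℝ)) * h ^ (M + n)) := by ring
    _ = (2 * Real.pi) ^ (-(n : ℝ)) * (Dtot * IW) * h ^ M := by rw [hpow]
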